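/- Let x, y be a heavy pair. If G \ {x,y} is disconnected, then y lies on the path π_x(s,H_x) and x lies on the path π_y(s,H_y), where H_x and H_y are the heavy components of x and y respectively. -/

import Mathlib

/-- A rooted spanning tree of the graph `G`, given by a root and a parent function:
the root is a fixed point of `parent`, every vertex reaches the root by iterating
`parent`, and every (parent, child) pair is an edge of `G`. -/
structure RSTree {V : Type*} (G : SimpleGraph V) where
  root : V
  parent : V → V
  parent_root : parent root = root
  reaches : ∀ v : V, ∃ n : ℕ, parent^[n] v = root
  adj : ∀ v : V, v ≠ root → G.Adj (parent v) v

namespace RSTree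

variable {V : Type*} {G : SimpleGraph V}

/-- `u` is an ancestor of `v` in `T`, i.e. `u` lies on the tree path `π(root, v)`;
includes `u = v`. -/
def Anc (T : RSTree G) (u v : V) : Prop := ∃ n : ℕ, T.parent^[n] v = u

/-- The vertex set `V(T_x)` of the subtree of `T` rooted at `x`. -/
def sub (T : RSTree G) (x : V) : Set V := {v | T.Anc x v}

/-- `c` is a child of `v` in `T`. -/
def IsChild (T : RSTree G) (c v : V) : Prop := T.parent c = v ∧ c ≠ v

/-- `V_x = V(T_x) \ {x}`. -/
def Vx (T : RSTree G) (x : V) : Set V := {v | T.Anc x v ∧ v ≠ x}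

end RSTree

/-- `v` and `w` are connected by a walk of `G` all of whose vertices lie in `S`
(i.e. they lie in the same connected component of the induced subgraph `G[S]`). -/
def ReachableWithin {V : Type*} (G : SimpleGraph V) (S : Set V) (v w : V) : Prop :=
  ∃ p : G.Walk v w, ∀ u ∈ p.support, u ∈ S

/-- `C` is (the vertex set of) a connected component of the induced subgraph `G[S]`. -/
def IsCompOf {V : Type*} (G : SimpleGraph V) (S : Set V) (C : Set V) : Prop :=
  ∃ v ∈ S, C = {w | ReachableWithin G S v w}

/-- The connected component of `v` in the induced subgraph `G[S]` (as a vertex set). -/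
def CompOfVert {V : Type*} (G : SimpleGraph V) (S : Set V) (v : V) : Set V :=
  {w | ReachableWithin G S v w}

/-- The vertex set of the path `π_x(s,C) = π(s, u_C) ∘ (u_C, v_C)` associated to a
component `C` (given the choice functions `uc, vc` of the edge `(u_C, v_C)`): it
consists of all ancestors of `u_C` together with `v_C`. -/
def CompPath {V : Type*} {G : SimpleGraph V} (T : RSTree G)
    (uc vc : Set V → V) (C : Set V) : Set V :=
  {w | T.Anc w (uc C)} ∪ {vc C}

/-- `C ∈ 𝒞_x` is pseudo-`y`-sensitive: the path `π_x(s,C)` contains a tree edge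
`(y, y')` from `y` to a child `y'` of `y` such that `x` does not lie on
`π_y(s, C_{y,y'})`. Here `ucx, vcx` are the edge choices for components of `G[V_x]`
and `ucy, vcy` those for components of `G[V_y]`. -/
def PseudoSens {V : Type*} {G : SimpleGraph V} (T : RSTree G)
    (ucx vcx ucy vcy : Set V → V) (x y : V) (C : Set V) : Prop :=
  ∃ y', T.IsChild y' y ∧ T.Anc y' (ucx C) ∧
    x ∉ CompPath T ucy vcy (CompOfVert G (T.Vx y) y')

/-- `C ∈ 𝒞_x` is fully-`y`-sensitive: `y` lies on `π_x(s,C)` (i.e. `C` is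
`y`-sensitive) and `C` is not pseudo-`y`-sensitive. -/
def FullySens {V : Type*} {G : SimpleGraph V} (T : RSTree G)
    (ucx vcx ucy vcy : Set V → V) (x y : V) (C : Set V) : Prop :=
  y ∈ CompPath T ucx vcx C ∧ ¬ PseudoSens T ucx vcx ucy vcy x y C

/-- `hch` is a valid designation of heavy children: for every non-leaf vertex `v`,
`hch v` is a child of `v` whose subtree has the maximum number of vertices among all
children of `v`. -/
def HchValid {V : Type*} {G : SimpleGraph V} (T : RSTree G) (hch : V → V) : Prop :=
  ∀ v : V, (∃ c, T.IsChild c v) →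
    T.IsChild (hch v) v ∧ ∀ c, T.IsChild c v → (T.sub c).ncard ≤ (T.sub (hch v)).ncard

/-- The family `uc, vc` of edge choices is valid: for every `x ≠ s` with `G \ {x}`
connected and every connected component `C` of `G[V_x]`, `(uc x C, vc x C)` is an edge
of `G` with `vc x C ∈ C` and `uc x C ∉ V(T_x)`. -/
def GoodChoice {V : Type*} (G : SimpleGraph V) (T : RSTree G)
    (uc vc : V → Set V → V) : Prop :=
  ∀ x : V, x ≠ T.root → (G.induce (({x} : Set V)ᶜ)).Connected →
    ∀ C, IsCompOf G (T.Vx x) C →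
      G.Adj (uc x C) (vc x C) ∧ vc x C ∈ C ∧ uc x C ∉ T.sub x

/-- `x, y` is a heavy pair: an independent pair, both non-leaves of `T`, both `≠ s`,
with `G \ {x}` and `G \ {y}` connected, such that every fully-`y`-sensitive component
`C ∈ FS(x,y)` has the tree edge `(y, y_h)` on `π_x(s,C)` and every fully-`x`-sensitive
component `C ∈ FS(y,x)` has the tree edge `(x, x_h)` on `π_y(s,C)`. -/
def HeavyPair {V : Type*} {G : SimpleGraph V} (T : RSTree G) (hch : V → V)
    (uc vc : V → Set V → V) (x y : V) : Prop :=
  x ≠ T.root ∧ y ≠ T.root ∧ ¬ T.Anc x y ∧ ¬ T.Anc y x ∧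
  T.IsChild (hch x) x ∧ T.IsChild (hch y) y ∧
  (G.induce (({x} : Set V)ᶜ)).Connected ∧ (G.induce (({y} : Set V)ᶜ)).Connected ∧
  (∀ C, IsCompOf G (T.Vx x) C → FullySens T (uc x) (vc x) (uc y) (vc y) x y C →
    T.Anc (hch y) (uc x C)) ∧
  (∀ C, IsCompOf G (T.Vx y) C → FullySens T (uc y) (vc y) (uc x) (vc x) y x C →
    T.Anc (hch x) (uc y C))

/-!
Contrapositive: assume `y` is not an ancestor of `u_{H_x}` and show that every vertex of
`G \ {x,y}` is joined to `s` there. Vertices outside `T_x ∪ T_y` use their tree path, and a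
component `C` of `G[V_x]` (or `G[V_y]`) is joined to `s` as soon as its attachment vertex `u_C` is.
The tree path to `u_{H_x}` avoids `x` and `y`, so `H_x` is joined to `s`. Then so is every
component `C` of `G[V_y]`: directly if `x` is not on `π(s,u_C)`; if `C` is pseudo-`x`-sensitive
through a child `x'` of `x`, because `u_C` lies in `C_{x,x'}`, which is joined to `s` directly;
otherwise `C` is fully `x`-sensitive, so `u_C` lies below `x_h`, i.e. in `H_x`. In particular `H_y`
is joined to `s`, and the same case analysis with the roles exchanged handles `G[V_x]`.
-/

section Graph

variable {V : Type*} {G : SimpleGraph V} {S A : Set V} {u v w r : V}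

namespace ReachableWithin

theorem mem_left (h : ReachableWithin G S v w) : v ∈ S :=
  h.elim fun p hp => hp v p.start_mem_support

theorem mem_right (h : ReachableWithin G S v w) : w ∈ S :=
  h.elim fun p hp => hp w p.end_mem_support

theorem refl (hv : v ∈ S) : ReachableWithin G S v v :=
  ⟨.nil, by simpa using hv⟩

theorem of_adj (h : G.Adj v w) (hv : v ∈ S) (hw : w ∈ S) : ReachableWithin G S v w :=
  ⟨h.toWalk, by simp [hv, hw]⟩

theorem symm (h : ReachableWithin G S v w) : ReachableWithin G S w v := by
  obtain ⟨p, hp⟩ := h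
  exact ⟨p.reverse, fun u hu => hp u (by simpa using hu)⟩

theorem trans (h₁ : ReachableWithin G S u v) (h₂ : ReachableWithin G S v w) :
    ReachableWithin G S u w := by
  obtain ⟨p, hp⟩ := h₁
  obtain ⟨q, hq⟩ := h₂
  refine ⟨p.append q, fun a ha => ?_⟩
  rcases SimpleGraph.Walk.mem_support_append_iff p q |>.mp ha with ha | ha
  exacts [hp a ha, hq a ha]

theorem mono (h : ReachableWithin G A v w) (hAS : A ⊆ S) : ReachableWithin G S v w :=
  h.elim fun p hp => ⟨p, fun u hu => hAS (hp u hu)⟩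

theorem reachable_induce (h : ReachableWithin G S v w) :
    (G.induce S).Reachable ⟨v, h.mem_left⟩ ⟨w, h.mem_right⟩ :=
  h.elim fun p hp => ⟨p.induce S hp⟩

end ReachableWithin

theorem compOfVert_subset : CompOfVert G S v ⊆ S :=
  fun _ hw => ReachableWithin.mem_right hw

theorem reachableWithin_of_mem_compOfVert (hu : u ∈ CompOfVert G S v)
    (hw : w ∈ CompOfVert G S v) : ReachableWithin G S u w :=
  ReachableWithin.trans (ReachableWithin.symm hu) hw

theorem compOfVert_subset_compOfVert_of_adj (hAS : A ⊆ S) (hu : u ∈ CompOfVert G S r)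
    (hadj : G.Adj u w) (hw : w ∈ CompOfVert G A v) : CompOfVert G A v ⊆ CompOfVert G S r := by
  have hwS : w ∈ S := hAS (compOfVert_subset hw)
  have hrw : ReachableWithin G S r w :=
    ReachableWithin.trans hu (.of_adj hadj (ReachableWithin.mem_right hu) hwS)
  exact fun a ha => hrw.trans ((reachableWithin_of_mem_compOfVert hw ha).mono hAS)

theorem connected_induce_of_subset_compOfVert (hr : r ∈ S) (h : S ⊆ CompOfVert G S r) :
    (G.induce S).Connected := by
  rw [SimpleGraph.connected_iff]
  refine ⟨fun a b => ?_, ⟨⟨r, hr⟩⟩⟩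
  exact (ReachableWithin.reachable_induce (h a.2)).symm.trans
    (ReachableWithin.reachable_induce (h b.2))

end Graph

namespace RSTree

variable {V : Type*} {G : SimpleGraph V} (T : RSTree G) {a b c p x y : V}

theorem anc_refl (a : V) : T.Anc a a := ⟨0, rfl⟩

theorem anc_trans (h₁ : T.Anc a b) (h₂ : T.Anc b c) : T.Anc a c := by
  obtain ⟨n, rfl⟩ := h₁
  obtain ⟨m, rfl⟩ := h₂
  exact ⟨n + m, Function.iterate_add_apply _ _ _ _⟩

theorem eq_root_of_iterate_eq_self {k : ℕ} (hk : T.parent^[k] a = a) (hk0 : k ≠ 0) :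
    a = T.root := by
  obtain ⟨n, hn⟩ := T.reaches a
  have hkn : T.parent^[k * n] a = a := by
    rw [Function.iterate_mul]
    exact Function.iterate_fixed hk n
  calc a = T.parent^[k * n] a := hkn.symm
    _ = T.parent^[k * n - n] (T.parent^[n] a) := by
      rw [← Function.iterate_add_apply, Nat.sub_add_cancel (Nat.le_mul_of_pos_left n (by omega))]
    _ = T.root := by rw [hn, Function.iterate_fixed T.parent_root]

theorem anc_antisymm (h₁ : T.Anc a b) (h₂ : T.Anc b a) : a = b := by
  obtain ⟨n, rfl⟩ := h₁
  obtain ⟨m, hm⟩ := h₂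
  rcases Nat.eq_zero_or_pos n with rfl | hn
  · rfl
  · have hb : b = T.root :=
      T.eq_root_of_iterate_eq_self (k := m + n) (by rw [Function.iterate_add_apply, hm])
        (by omega)
    subst hb
    exact Function.iterate_fixed T.parent_root n

theorem IsChild.anc (h : T.IsChild c p) : T.Anc p c := ⟨1, h.1⟩

theorem IsChild.mem_Vx (h : T.IsChild c p) : c ∈ T.Vx p := ⟨IsChild.anc T h, h.2⟩

theorem exists_walk_of_anc (h : T.Anc a b) :
    ∃ q : G.Walk a b, ∀ u ∈ q.support, T.Anc a u ∧ T.Anc u b := by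
  obtain ⟨n, rfl⟩ := h
  induction n generalizing b with
  | zero => exact ⟨.nil, by simp [anc_refl]⟩
  | succ n ih =>
    by_cases hb : b = T.root
    · subst hb
      rw [Function.iterate_fixed T.parent_root]
      exact ⟨.nil, by simp [anc_refl]⟩
    · obtain ⟨q, hq⟩ := ih (b := T.parent b)
      rw [Function.iterate_succ_apply]
      refine ⟨q.concat (T.adj b hb), fun u hu => ?_⟩
      rcases List.mem_append.mp (SimpleGraph.Walk.support_concat q _ ▸ hu) with hu | hu
      · exact ⟨(hq u hu).1, T.anc_trans (hq u hu).2 ⟨1, rfl⟩⟩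
      · obtain rfl := List.mem_singleton.mp hu
        exact ⟨⟨n + 1, rfl⟩, T.anc_refl u⟩

theorem reachableWithin_of_anc {S : Set V} (h : T.Anc a b)
    (hS : ∀ u, T.Anc a u → T.Anc u b → u ∈ S) : ReachableWithin G S a b :=
  (T.exists_walk_of_anc h).elim fun q hq => ⟨q, fun u hu => hS u (hq u hu).1 (hq u hu).2⟩

theorem mem_compOfVert_root_of_not_anc {u : V} (hx : ¬ T.Anc x u) (hy : ¬ T.Anc y u) :
    u ∈ CompOfVert G ({x, y} : Set V)ᶜ T.root := by
  refine T.reachableWithin_of_anc (T.reaches u) fun w _ hw => ?_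
  rintro (rfl | rfl)
  exacts [hx hw, hy hw]

theorem mem_compOfVert_of_anc (hc : T.IsChild c p) (h : T.Anc c a) :
    a ∈ CompOfVert G (T.Vx p) c := by
  refine T.reachableWithin_of_anc h fun w hcw _ => ⟨T.anc_trans (IsChild.anc T hc) hcw, ?_⟩
  rintro rfl
  exact hc.2 (T.anc_antisymm hcw (IsChild.anc T hc))

theorem Vx_subset_compl_pair (hxy : ¬ T.Anc x y) : T.Vx x ⊆ ({x, y} : Set V)ᶜ := by
  rintro w ⟨hxw, hwx⟩ (rfl | rfl)
  exacts [hwx rfl, hxy hxw]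

end RSTree

section AttachedComponent

variable {V : Type*} {G : SimpleGraph V} {T : RSTree G} {uc vc : V → Set V → V}
  {x y v : V}

variable (hgood : GoodChoice G T uc vc) (hxr : x ≠ T.root)
  (hxc : (G.induce ({x} : Set V)ᶜ).Connected) (hxy : ¬ T.Anc x y) (hv : v ∈ T.Vx x)
include hgood hxr hxc hxy hv

theorem compOfVert_subset_compOfVert_root_of_uc_mem
    (hu : uc x (CompOfVert G (T.Vx x) v) ∈ CompOfVert G ({x, y} : Set V)ᶜ T.root) :
    CompOfVert G (T.Vx x) v ⊆ CompOfVert G ({x, y} : Set V)ᶜ T.root :=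
  have ⟨hadj, hvc, _⟩ := hgood x hxr hxc _ ⟨v, hv, rfl⟩
  compOfVert_subset_compOfVert_of_adj (T.Vx_subset_compl_pair hxy) hu hadj hvc

theorem compOfVert_subset_compOfVert_root_of_not_anc
    (hns : ¬ T.Anc y (uc x (CompOfVert G (T.Vx x) v))) :
    CompOfVert G (T.Vx x) v ⊆ CompOfVert G ({x, y} : Set V)ᶜ T.root :=
  have ⟨_, _, huc⟩ := hgood x hxr hxc _ ⟨v, hv, rfl⟩
  compOfVert_subset_compOfVert_root_of_uc_mem hgood hxr hxc hxy hv
    (T.mem_compOfVert_root_of_not_anc huc hns)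

theorem compOfVert_subset_compOfVert_root_of_pseudoSens (hyr : y ≠ T.root)
    (hyc : (G.induce ({y} : Set V)ᶜ).Connected) (hyx : ¬ T.Anc y x)
    (hps : PseudoSens T (uc x) (vc x) (uc y) (vc y) x y (CompOfVert G (T.Vx x) v)) :
    CompOfVert G (T.Vx x) v ⊆ CompOfVert G ({x, y} : Set V)ᶜ T.root := by
  obtain ⟨y', hy', hu, hx⟩ := hps
  have hC' := compOfVert_subset_compOfVert_root_of_not_anc hgood hyr hyc hyx
    (RSTree.IsChild.mem_Vx T hy') fun h => hx (Or.inl h)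
  rw [Set.pair_comm] at hC'
  exact compOfVert_subset_compOfVert_root_of_uc_mem hgood hxr hxc hxy hv
    (hC' (T.mem_compOfVert_of_anc hy' hu))

end AttachedComponent

section HeavyPair

variable {V : Type*} {G : SimpleGraph V} {T : RSTree G} {hch : V → V}
  {uc vc : V → Set V → V} {x y : V}

theorem HeavyPair.symm (h : HeavyPair T hch uc vc x y) :
    HeavyPair T hch uc vc y x := by
  obtain ⟨hxr, hyr, hxy, hyx, hx, hy, hxc, hyc, hfx, hfy⟩ := h
  exact ⟨hyr, hxr, hyx, hxy, hy, hx, hyc, hxc, hfy, hfx⟩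

theorem HeavyPair.Vx_subset_compOfVert_root (hgood : GoodChoice G T uc vc)
    (hp : HeavyPair T hch uc vc x y)
    (hHy : CompOfVert G (T.Vx y) (hch y) ⊆ CompOfVert G ({x, y} : Set V)ᶜ T.root) :
    T.Vx x ⊆ CompOfVert G ({x, y} : Set V)ᶜ T.root := by
  obtain ⟨hxr, hyr, hxy, hyx, -, hy, hxc, hyc, hfx, -⟩ := hp
  intro v hv
  suffices CompOfVert G (T.Vx x) v ⊆ CompOfVert G ({x, y} : Set V)ᶜ T.root from
    this (ReachableWithin.refl hv)
  by_cases hs : T.Anc y (uc x (CompOfVert G (T.Vx x) v))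
  · by_cases hps : PseudoSens T (uc x) (vc x) (uc y) (vc y) x y (CompOfVert G (T.Vx x) v)
    · exact compOfVert_subset_compOfVert_root_of_pseudoSens hgood hxr hxc hxy hv hyr hyc hyx hps
    · have hyh := hfx _ ⟨v, hv, rfl⟩ ⟨Or.inl hs, hps⟩
      exact compOfVert_subset_compOfVert_root_of_uc_mem hgood hxr hxc hxy hv
        (hHy (T.mem_compOfVert_of_anc hy hyh))
  · exact compOfVert_subset_compOfVert_root_of_not_anc hgood hxr hxc hxy hv hs

theorem HeavyPair.connected_induce_compl_pair (hgood : GoodChoice G T uc vc)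
    (hp : HeavyPair T hch uc vc x y)
    (hns : ¬ T.Anc y (uc x (CompOfVert G (T.Vx x) (hch x)))) :
    (G.induce ({x, y} : Set V)ᶜ).Connected := by
  have ⟨hxr, hyr, hxy, _, hx, _, hxc, _⟩ := hp
  have hHx := compOfVert_subset_compOfVert_root_of_not_anc hgood hxr hxc hxy
    (RSTree.IsChild.mem_Vx T hx) hns
  rw [Set.pair_comm] at hHx
  have hVy := hp.symm.Vx_subset_compOfVert_root hgood hHx
  rw [Set.pair_comm] at hVy
  have hHy := (compOfVert_subset.trans hVy : CompOfVert G (T.Vx y) (hch y) ⊆ _)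
  have hVx := hp.Vx_subset_compOfVert_root hgood hHy
  refine connected_induce_of_subset_compOfVert (r := T.root) ?_ fun v hv => ?_
  · rintro (h | h)
    exacts [hxr h.symm, hyr h.symm]
  · have hvx : v ≠ x := fun h => hv (Or.inl h)
    have hvy : v ≠ y := fun h => hv (Or.inr h)
    by_cases hx : T.Anc x v
    · exact hVx ⟨hx, hvx⟩
    by_cases hy : T.Anc y v
    · exact hVy ⟨hy, hvy⟩
    exact T.mem_compOfVert_root_of_not_anc hx hy

end HeavyPair

theorem stmt11_general {V : Type*} (G : SimpleGraph V)
    (T : RSTree G) (hch : V → V)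
    (uc vc : V → Set V → V) (hgood : GoodChoice G T uc vc)
    (x y : V) (hxy : HeavyPair T hch uc vc x y)
    (hdis : ¬ (G.induce (({x, y} : Set V)ᶜ)).Connected) :
    y ∈ CompPath T (uc x) (vc x) (CompOfVert G (T.Vx x) (hch x)) ∧
    x ∈ CompPath T (uc y) (vc y) (CompOfVert G (T.Vx y) (hch y)) := by
  constructor
  · by_contra hy
    exact hdis (hxy.connected_induce_compl_pair hgood fun h => hy (Or.inl h))
  · by_contra hx
    rw [Set.pair_comm] at hdis
    exact hdis (hxy.symm.connected_induce_compl_pair hgood fun h => hx (Or.inl h))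

/-- Let `x, y` be a heavy pair. If `G \ {x,y}` is disconnected, then
`y` lies on the path `π_x(s, H_x)` and `x` lies on the path `π_y(s, H_y)`, where `H_x`
and `H_y` are the heavy components of `x` and `y` (the components of `G[V_x]`, resp.
`G[V_y]`, containing the heavy child `x_h`, resp. `y_h`). -/
theorem stmt11 {V : Type*} [Fintype V] (G : SimpleGraph V) (hG : G.Connected)
    (T : RSTree G) (hch : V → V) (hhch : HchValid T hch)
    (uc vc : V → Set V → V) (hgood : GoodChoice G T uc vc)
    (x y : V) (hxy : HeavyPair T hch uc vc x y)
    (hdis : ¬ (G.induce (({x, y} : Set V)ᶜ)).Connected) :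
    y ∈ CompPath T (uc x) (vc x) (CompOfVert G (T.Vx x) (hch x)) ∧
    x ∈ CompPath T (uc y) (vc y) (CompOfVert G (T.Vx y) (hch y)) :=
  stmt11_general G T hch uc vc hgood x y hxy hdis
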